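/- Soundness of the goal-driven coupling rule for associativity: for an associative binary symbol f, if f(s₀,s₁) ⊴_A t₀ and s₂ ⊴_A t₁ then f(s₀,f(s₁,s₂)) ⊴_A f(t₀,t₁), where ⊴_A = (=_A) ∘ (⊴) ∘ (=_A) and =_A is the congruence generated by f(x,f(y,z)) = f(f(x,y),z). -/

import Mathlib

/-- Terms with atoms and a binary symbol `f`. -/
inductive T2 (α : Type) : Type
  | atom : α → T2 α
  | f : T2 α → T2 α → T2 α

/-- Homeomorphic embedding: Diving and Coupling. -/
inductive Emb {α : Type} : T2 α → T2 α → Prop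
  | atom (a : α) : Emb (.atom a) (.atom a)
  | diveL {s t₁ t₂ : T2 α} : Emb s t₁ → Emb s (.f t₁ t₂)
  | diveR {s t₁ t₂ : T2 α} : Emb s t₂ → Emb s (.f t₁ t₂)
  | couple {s₁ s₂ t₁ t₂ : T2 α} : Emb s₁ t₁ → Emb s₂ t₂ → Emb (.f s₁ s₂) (.f t₁ t₂)

/-- The congruence `=_A` generated by associativity of `f`. -/
inductive AEq {α : Type} : T2 α → T2 α → Prop
  | refl (t : T2 α) : AEq t t
  | symm {s t : T2 α} : AEq s t → AEq t s
  | trans {s t u : T2 α} : AEq s t → AEq t u → AEq s u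
  | congr {s s' t t' : T2 α} : AEq s s' → AEq t t' → AEq (.f s t) (.f s' t')
  | assoc (x y z : T2 α) : AEq (.f x (.f y z)) (.f (.f x y) z)

/-- `⊴_A = (=_A) ∘ (⊴) ∘ (=_A)`. -/
def EmbA {α : Type} (s t : T2 α) : Prop :=
  ∃ s' t', AEq s s' ∧ Emb s' t' ∧ AEq t' t

namespace EmbA

variable {α : Type}

theorem couple {s₁ s₂ t₁ t₂ : T2 α} (h₁ : EmbA s₁ t₁) (h₂ : EmbA s₂ t₂) :
    EmbA (T2.f s₁ s₂) (T2.f t₁ t₂) := by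
  obtain ⟨s₁', t₁', hs₁, h₁, ht₁⟩ := h₁
  obtain ⟨s₂', t₂', hs₂, h₂, ht₂⟩ := h₂
  exact ⟨.f s₁' s₂', .f t₁' t₂', .congr hs₁ hs₂, .couple h₁ h₂, .congr ht₁ ht₂⟩

theorem of_aeq_left {s s' t : T2 α} (hs : AEq s s') (h : EmbA s' t) : EmbA s t := by
  obtain ⟨s'', t', hs', h, ht⟩ := h
  exact ⟨s'', t', hs.trans hs', h, ht⟩

end EmbA

/-- Soundness of the goal-driven Coupling_A rule. -/
theorem couplingA_sound {α : Type} {s₀ s₁ s₂ t₀ t₁ : T2 α}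
    (h₁ : EmbA (T2.f s₀ s₁) t₀) (h₂ : EmbA s₂ t₁) :
    EmbA (T2.f s₀ (T2.f s₁ s₂)) (T2.f t₀ t₁) :=
  (h₁.couple h₂).of_aeq_left (.assoc s₀ s₁ s₂)
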